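/- arXiv:1008.1261 — 3 statements merged into one kernel-verified Lean document; each statement's English description precedes it below -/
import Mathlib

section
/- Let K be a compact topological group and V a finite-dimensional real vector space with a continuous linear representation of K, and let ω be a K-invariant alternating bilinear form on V. Let V^K be the fixed subspace. Then the kernel of the restriction of ω to V^K equals the intersection of the kernel of ω with V^K; that is, {v ∈ V^K : ω(v, u) = 0 for all u ∈ V^K} = {v ∈ V : ω(v, u) = 0 for all u ∈ V} ∩ V^K. -/
/-! Average `k ↦ ρ k u` against the normalized Haar measure of `K`: the average is fixed, and
every `K`-invariant functional takes the same value on it as on `u`. For fixed `v` the functional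
`ω v` is `K`-invariant, so `v ∈ ker (ω|_{V^K})` gives `ω v u = ω v (∫ ρ k u) = 0`. -/

/-- The submodule of vectors fixed by a linear representation `ρ` of a group `K`. -/
def fixedSubmodule {K V : Type*} [Group K] [AddCommGroup V] [Module ℝ V]
    (ρ : K →* (V ≃ₗ[ℝ] V)) : Submodule ℝ V where
  carrier := {v | ∀ k : K, ρ k v = v}
  add_mem' := by
    intro a b ha hb k
    simp [map_add, ha k, hb k]
  zero_mem' := by
    intro k
    simp
  smul_mem' := by
    intro c v hv k
    simp [map_smul, hv k]

open MeasureTheory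

section Averaging

variable {K V : Type*} [Group K] [MeasurableSpace K]
  [NormedAddCommGroup V] [NormedSpace ℝ V] (ρ : K →* (V ≃ₗ[ℝ] V)) (μ : Measure K)

theorem integral_mem_fixedSubmodule [FiniteDimensional ℝ V] [MeasurableMul K]
    [μ.IsMulLeftInvariant] (u : V) : ∫ k, ρ k u ∂μ ∈ fixedSubmodule ρ := fun g =>
  calc ρ g (∫ k, ρ k u ∂μ) = ∫ k, ρ g (ρ k u) ∂μ :=
        ((ρ g).toContinuousLinearEquiv.integral_comp_comm _).symm
    _ = ∫ k, ρ (g * k) u ∂μ := by simp only [map_mul, LinearEquiv.mul_apply]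
    _ = ∫ k, ρ k u ∂μ := integral_mul_left_eq_self (fun k => ρ k u) g

theorem map_integral_of_forall_map_apply_eq [CompleteSpace V] [IsProbabilityMeasure μ]
    {W : Type*} [NormedAddCommGroup W] [NormedSpace ℝ W] [CompleteSpace W] (φ : V →L[ℝ] W)
    (hφ : ∀ k v, φ (ρ k v) = φ v) {u : V} (hu : Integrable (fun k => ρ k u) μ) :
    φ (∫ k, ρ k u ∂μ) = φ u := by
  rw [← φ.integral_comp_comm hu]
  simp only [hφ, integral_const, probReal_univ, one_smul]

end Averaging

instance isProbabilityMeasure_haarMeasure_top {K : Type*} [Group K] [TopologicalSpace K]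
    [IsTopologicalGroup K] [CompactSpace K] [MeasurableSpace K] [BorelSpace K] :
    IsProbabilityMeasure (Measure.haarMeasure (⊤ : TopologicalSpace.PositiveCompacts K)) :=
  ⟨Measure.haarMeasure_self⟩

theorem ker_restriction_eq_ker_inter_fixed_general
    {K V : Type*} [Group K] [TopologicalSpace K] [IsTopologicalGroup K] [CompactSpace K]
    [NormedAddCommGroup V] [NormedSpace ℝ V] [FiniteDimensional ℝ V]
    (ρ : K →* (V ≃ₗ[ℝ] V)) (hρ : Continuous fun p : K × V => ρ p.1 p.2)
    (ω : V →ₗ[ℝ] V →ₗ[ℝ] ℝ)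
    (hω : ∀ (k : K) (u v : V), ω (ρ k u) (ρ k v) = ω u v) :
    {v : V | v ∈ fixedSubmodule ρ ∧ ∀ u ∈ fixedSubmodule ρ, ω v u = 0} =
      {v : V | ∀ u : V, ω v u = 0} ∩ (fixedSubmodule ρ : Set V) := by
  borelize K
  let μ := Measure.haarMeasure (⊤ : TopologicalSpace.PositiveCompacts K)
  ext v
  refine ⟨fun ⟨hv, hker⟩ => ⟨fun u => ?_, hv⟩, fun ⟨hker, hv⟩ => ⟨hv, fun u _ => hker u⟩⟩
  have hinv : ∀ k w, ω v (ρ k w) = ω v w := fun k w => by rw [← hω k v w, hv k]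
  have hint : Integrable (fun k => ρ k u) μ :=
    (hρ.comp (continuous_id.prodMk continuous_const)).integrable_of_hasCompactSupport
      (.of_compactSpace _)
  calc ω v u = ω v (∫ k, ρ k u ∂μ) :=
        (map_integral_of_forall_map_apply_eq ρ μ (ω v).toContinuousLinearMap hinv hint).symm
    _ = 0 := hker _ (integral_mem_fixedSubmodule ρ μ u)

/-- For a continuous representation of a compact group `K` on a finite-dimensional real
vector space `V` and a `K`-invariant alternating bilinear form `ω` on `V`, the kernel of
the restriction of `ω` to the fixed subspace `V^K` equals `(ker ω) ∩ V^K`. -/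
theorem ker_restriction_eq_ker_inter_fixed
    {K V : Type*} [Group K] [TopologicalSpace K] [IsTopologicalGroup K] [CompactSpace K]
    [NormedAddCommGroup V] [NormedSpace ℝ V] [FiniteDimensional ℝ V]
    (ρ : K →* (V ≃ₗ[ℝ] V)) (hρ : Continuous fun p : K × V => ρ p.1 p.2)
    (ω : V →ₗ[ℝ] V →ₗ[ℝ] ℝ)
    (hω : ∀ (k : K) (u v : V), ω (ρ k u) (ρ k v) = ω u v)
    (halt : ∀ v : V, ω v v = 0) :
    {v : V | v ∈ fixedSubmodule ρ ∧ ∀ u ∈ fixedSubmodule ρ, ω v u = 0} =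
      {v : V | ∀ u : V, ω v u = 0} ∩ (fixedSubmodule ρ : Set V) :=
  ker_restriction_eq_ker_inter_fixed_general ρ hρ ω hω
end

section
/- Let K be a compact topological group, let V and U be finite-dimensional real vector spaces with continuous linear representations of K, let ω be a K-invariant alternating bilinear form on V, and let f : V → U be a K-equivariant linear map. If the kernel of ω intersects the kernel of f trivially (i.e. {v ∈ V : ω(v, w) = 0 for all w ∈ V} ∩ ker f = {0}), then the kernel of the restriction of ω to the fixed subspace V^K intersects the kernel of the restriction of f to V^K trivially: {v ∈ V^K : ω(v, u) = 0 for all u ∈ V^K} ∩ ker f = {0}. -/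
/-!
Averaging over the normalized Haar measure of `K` maps `V` into `V^K`. For `v ∈ V^K` the
functional `ω v` is `K`-invariant, so `ω v w` equals `ω v` applied to the average of the orbit
of `w`, which vanishes because `ω v` vanishes on `V^K`. Hence `v ∈ ker ω ∩ ker f = 0`.
-/

open MeasureTheory

theorem exists_isProbabilityMeasure_isHaarMeasure (K : Type*) [Group K] [TopologicalSpace K]
    [IsTopologicalGroup K] [CompactSpace K] [MeasurableSpace K] [BorelSpace K] :
    ∃ μ : Measure K, IsProbabilityMeasure μ ∧ μ.IsHaarMeasure := by
  have : Nonempty K := ⟨1⟩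
  refine ⟨Measure.haarMeasure ⊤, ⟨?_⟩, inferInstance⟩
  rw [← TopologicalSpace.PositiveCompacts.coe_top (α := K)]
  exact Measure.haarMeasure_self

section Averaging

variable {K V : Type*} [Group K] [TopologicalSpace K] [CompactSpace K]
  [NormedAddCommGroup V] [NormedSpace ℝ V] {ρ : K →* (V ≃ₗ[ℝ] V)}

theorem integrable_orbit [MeasurableSpace K] [OpensMeasurableSpace K] (μ : Measure K)
    [IsFiniteMeasureOnCompacts μ] (hρ : Continuous fun p : K × V => ρ p.1 p.2) (w : V) :
    Integrable (fun g => ρ g w) μ :=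
  (hρ.comp (continuous_id.prodMk continuous_const)).integrable_of_hasCompactSupport
    (HasCompactSupport.of_compactSpace _)

theorem integral_orbit_mem_fixedSubmodule [CompleteSpace V] [MeasurableSpace K]
    [OpensMeasurableSpace K] [MeasurableMul K] (μ : Measure K) [μ.IsMulLeftInvariant]
    [IsFiniteMeasureOnCompacts μ]
    (hρ : Continuous fun p : K × V => ρ p.1 p.2) (w : V) :
    ∫ g, ρ g w ∂μ ∈ fixedSubmodule ρ := by
  intro k
  let ρk : V →L[ℝ] V := ⟨ρ k, hρ.comp (continuous_const.prodMk continuous_id)⟩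
  calc ρ k (∫ g, ρ g w ∂μ) = ∫ g, ρ (k * g) w ∂μ := by
        simp only [map_mul]
        exact (ρk.integral_comp_comm (integrable_orbit μ hρ w)).symm
    _ = ∫ g, ρ g w ∂μ := integral_mul_left_eq_self (fun g => ρ g w) k

theorem ContinuousLinearMap.eq_zero_of_invariant_of_vanishing_on_fixedSubmodule
    [CompleteSpace V] [IsTopologicalGroup K] {F : Type*} [NormedAddCommGroup F]
    [NormedSpace ℝ F] [CompleteSpace F] (hρ : Continuous fun p : K × V => ρ p.1 p.2) (φ : V →L[ℝ] F)
    (hinv : ∀ k w, φ (ρ k w) = φ w) (hfix : ∀ u ∈ fixedSubmodule ρ, φ u = 0) : φ = 0 := by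
  borelize K
  obtain ⟨μ, _, _⟩ := exists_isProbabilityMeasure_isHaarMeasure K
  ext w
  calc φ w = ∫ g, φ (ρ g w) ∂μ := by simp [hinv]
    _ = φ (∫ g, ρ g w ∂μ) := φ.integral_comp_comm (integrable_orbit μ hρ w)
    _ = 0 := hfix _ (integral_orbit_mem_fixedSubmodule μ hρ w)

end Averaging

theorem minimal_degeneracy_on_fixed_subspace_general
    {K V U : Type*} [Group K] [TopologicalSpace K] [IsTopologicalGroup K] [CompactSpace K]
    [NormedAddCommGroup V] [NormedSpace ℝ V] [FiniteDimensional ℝ V]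
    [NormedAddCommGroup U] [NormedSpace ℝ U]
    (ρ : K →* (V ≃ₗ[ℝ] V)) (hρ : Continuous fun p : K × V => ρ p.1 p.2)
    (ω : V →ₗ[ℝ] V →ₗ[ℝ] ℝ)
    (hω : ∀ (k : K) (u v : V), ω (ρ k u) (ρ k v) = ω u v)
    (f : V →ₗ[ℝ] U)
    (htriv : ∀ v : V, (∀ w : V, ω v w = 0) → f v = 0 → v = 0) :
    ∀ v ∈ fixedSubmodule ρ, (∀ u ∈ fixedSubmodule ρ, ω v u = 0) → f v = 0 → v = 0 := by
  intro v hv hωv hfv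
  have hinv : ∀ k w, ω v (ρ k w) = ω v w := fun k w => by simpa [hv k] using hω k v w
  have hker : LinearMap.toContinuousLinearMap (ω v) = 0 :=
    (LinearMap.toContinuousLinearMap (ω v)).eq_zero_of_invariant_of_vanishing_on_fixedSubmodule
      hρ hinv hωv
  exact htriv v (fun w => congr($hker w)) hfv

/-- Linear-algebra content of Proposition 3.2: if a `K`-invariant alternating bilinear form
`ω` on `V` and a `K`-equivariant linear map `f : V → U` satisfy `ker ω ∩ ker f = 0`, then the
kernel of the restriction of `ω` to the fixed subspace `V^K` intersects `ker f` trivially. -/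
theorem minimal_degeneracy_on_fixed_subspace
    {K V U : Type*} [Group K] [TopologicalSpace K] [IsTopologicalGroup K] [CompactSpace K]
    [NormedAddCommGroup V] [NormedSpace ℝ V] [FiniteDimensional ℝ V]
    [NormedAddCommGroup U] [NormedSpace ℝ U] [FiniteDimensional ℝ U]
    (ρ : K →* (V ≃ₗ[ℝ] V)) (hρ : Continuous fun p : K × V => ρ p.1 p.2)
    (σ : K →* (U ≃ₗ[ℝ] U)) (hσ : Continuous fun p : K × U => σ p.1 p.2)
    (ω : V →ₗ[ℝ] V →ₗ[ℝ] ℝ)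
    (hω : ∀ (k : K) (u v : V), ω (ρ k u) (ρ k v) = ω u v)
    (halt : ∀ v : V, ω v v = 0)
    (f : V →ₗ[ℝ] U)
    (hf : ∀ (k : K) (v : V), f (ρ k v) = σ k (f v))
    (htriv : ∀ v : V, (∀ w : V, ω v w = 0) → f v = 0 → v = 0) :
    ∀ v ∈ fixedSubmodule ρ, (∀ u ∈ fixedSubmodule ρ, ω v u = 0) → f v = 0 → v = 0 :=
  minimal_degeneracy_on_fixed_subspace_general ρ hρ ω hω f htriv
end

section
/- Let 𝔤 and V be finite-dimensional real vector spaces, B a nondegenerate symmetric bilinear form on 𝔤, T : 𝔤 → 𝔤 a linear isomorphism preserving B (B(Tx, Ty) = B(x, y) for all x, y), ω an alternating bilinear form on V, and A : 𝔤 → V, μ : V → 𝔤 linear maps satisfying: (M1) ω(Aξ, v) = (1/2)·B((1 + T)(μ(v)), ξ) for all ξ ∈ 𝔤, v ∈ V, and (M2) μ(Aξ) = (T⁻¹ − 1)ξ for all ξ ∈ 𝔤. Then ker(ω) ∩ ker(μ) = {0} if and only if ker(ω) = A(ker(1 + T)), where ker(ω) = {v ∈ V : ω(v, w) = 0 for all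 w ∈ V}. Moreover, in this case dim ker(ω) = dim ker(1 + T). -/
/-- Pointwise form of the equivalence of Bursztyn–Crainic and Xu: for data modeling a
q-Hamiltonian space at a point (with (M1) the moment map condition and (M2) equivariance),
the transversality condition `ker ω ∩ ker μ = 0` holds iff `ker ω = A(ker(1 + T))`;
in that case `dim ker ω = dim ker(1 + T)`. -/
theorem ker_omega_inter_ker_mu_eq_bot_iff
    {g V : Type*} [AddCommGroup g] [Module ℝ g] [FiniteDimensional ℝ g]
    [AddCommGroup V] [Module ℝ V] [FiniteDimensional ℝ V]
    (B : g →ₗ[ℝ] g →ₗ[ℝ] ℝ)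
    (hBsymm : ∀ x y : g, B x y = B y x)
    (hBnondeg : ∀ x : g, (∀ y : g, B x y = 0) → x = 0)
    (T : g ≃ₗ[ℝ] g)
    (hT : ∀ x y : g, B (T x) (T y) = B x y)
    (ω : V →ₗ[ℝ] V →ₗ[ℝ] ℝ)
    (halt : ∀ v : V, ω v v = 0)
    (A : g →ₗ[ℝ] V) (μ : V →ₗ[ℝ] g)
    (hM1 : ∀ (ξ : g) (v : V), ω (A ξ) v = (1 / 2 : ℝ) * B (μ v + T (μ v)) ξ)
    (hM2 : ∀ ξ : g, μ (A ξ) = T.symm ξ - ξ) :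
    (LinearMap.ker ω ⊓ LinearMap.ker μ = ⊥ ↔
      LinearMap.ker ω =
        Submodule.map A (LinearMap.ker (LinearMap.id + (T : g →ₗ[ℝ] g)))) ∧
    (LinearMap.ker ω ⊓ LinearMap.ker μ = ⊥ →
      Module.finrank ℝ (LinearMap.ker ω) =
        Module.finrank ℝ (LinearMap.ker (LinearMap.id + (T : g →ₗ[ℝ] g)))) := by
  -- skew symmetry of ω
  have hskew : ∀ v w : V, ω v w = - ω w v := by
    intro v w
    have h := halt (v + w)
    simp only [map_add, LinearMap.add_apply, halt] at h
    linarith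
  -- membership in ker(1+T)
  have hker1T : ∀ ξ : g, ξ ∈ LinearMap.ker (LinearMap.id + (T : g →ₗ[ℝ] g)) ↔ ξ + T ξ = 0 := by
    intro ξ
    simp [LinearMap.mem_ker, LinearMap.add_apply]
  -- B((1+T)x, ξ) = 0 for ξ an eigenvector of T with eigenvalue -1
  have hBker : ∀ (ξ x : g), ξ + T ξ = 0 → B (x + T x) ξ = 0 := by
    intro ξ x hξ
    have hξ2 : ξ = -(T ξ) := eq_neg_of_add_eq_zero_left hξ
    have h1 : B (T x) ξ = - B x ξ := by
      conv_lhs => rw [hξ2]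
      rw [map_neg, hT]
    rw [map_add, LinearMap.add_apply, h1]
    ring
  -- A(ker(1+T)) ⊆ ker ω
  have hA_ker : ∀ ξ : g, ξ + T ξ = 0 → A ξ ∈ LinearMap.ker ω := by
    intro ξ hξ
    rw [LinearMap.mem_ker]
    ext v
    simp only [LinearMap.zero_apply]
    rw [hM1, hBker ξ (μ v) hξ, mul_zero]
  have hTsymm : ∀ ξ : g, ξ + T ξ = 0 → T.symm ξ = -ξ := by
    intro ξ hξ
    apply T.injective
    rw [T.apply_symm_apply, map_neg]
    exact eq_neg_of_add_eq_zero_left hξ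
  -- the main iff
  have hiff : LinearMap.ker ω ⊓ LinearMap.ker μ = ⊥ ↔
      LinearMap.ker ω =
        Submodule.map A (LinearMap.ker (LinearMap.id + (T : g →ₗ[ℝ] g))) := by
    constructor
    · intro htrans
      apply le_antisymm
      · intro v hv
        have hvω : ω v = 0 := hv
        -- (1+T)(μ v) = 0
        have h1T : μ v + T (μ v) = 0 := by
          apply hBnondeg
          intro y
          have h := hM1 y v
          have h2 : ω (A y) v = 0 := by
            rw [hskew, hvω]
            simp
          rw [h2] at h
          linarith
        set ξ₀ := μ v with hξ₀
        have hμu : μ (v + (1/2 : ℝ) • A ξ₀) = 0 := by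
          rw [map_add, map_smul, hM2, hTsymm ξ₀ h1T]
          show ξ₀ + (1/2 : ℝ) • (-ξ₀ - ξ₀) = 0
          module
        have hωu : (v + (1/2 : ℝ) • A ξ₀) ∈ LinearMap.ker ω := by
          rw [LinearMap.mem_ker, map_add, map_smul, hvω]
          have := hA_ker ξ₀ h1T
          rw [LinearMap.mem_ker] at this
          rw [this]
          simp
        have hu0 : v + (1/2 : ℝ) • A ξ₀ = 0 := by
          have : (v + (1/2 : ℝ) • A ξ₀) ∈ LinearMap.ker ω ⊓ LinearMap.ker μ :=
            ⟨hωu, hμu⟩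
          rw [htrans] at this
          simpa using this
        refine ⟨-(1/2 : ℝ) • ξ₀, ?_, ?_⟩
        · rw [SetLike.mem_coe, hker1T, map_smul, ← smul_add, h1T, smul_zero]
        · rw [map_smul]
          have : v = -((1/2 : ℝ) • A ξ₀) := eq_neg_of_add_eq_zero_left hu0
          rw [this, neg_smul]
      · rintro v ⟨ξ, hξ, rfl⟩
        rw [SetLike.mem_coe, hker1T] at hξ
        exact hA_ker ξ hξ
    · intro heq
      rw [eq_bot_iff]
      rintro v ⟨hvω, hvμ⟩
      rw [SetLike.mem_coe, heq] at hvω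
      obtain ⟨ξ, hξ, rfl⟩ := hvω
      rw [SetLike.mem_coe] at hvμ
      rw [SetLike.mem_coe, hker1T] at hξ
      have hμ : μ (A ξ) = 0 := hvμ
      rw [hM2, hTsymm ξ hξ] at hμ
      have hξ0 : ξ = 0 := by
        have : (-2 : ℝ) • ξ = 0 := by
          rw [show (-2 : ℝ) • ξ = -ξ - ξ by
            rw [show (-2 : ℝ) = (-1) + (-1) by norm_num, add_smul]
            simp [sub_eq_add_neg]]
          exact hμ
        have := smul_eq_zero.mp this
        rcases this with h | h
        · norm_num at h
        · exact h
      simp [hξ0]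
  refine ⟨hiff, ?_⟩
  intro htrans
  have heq := hiff.mp htrans
  set K := LinearMap.ker (LinearMap.id + (T : g →ₗ[ℝ] g)) with hK
  have hinj : Function.Injective (A ∘ₗ K.subtype) := by
    rw [← LinearMap.ker_eq_bot, eq_bot_iff]
    rintro ⟨ξ, hξ⟩ hmem
    rw [LinearMap.mem_ker] at hmem
    simp only [LinearMap.comp_apply, Submodule.subtype_apply] at hmem
    rw [hK, hker1T] at hξ
    have hμ : μ (A ξ) = 0 := by rw [hmem, map_zero]
    rw [hM2, hTsymm ξ hξ] at hμ
    have : (-2 : ℝ) • ξ = 0 := by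
      rw [show (-2 : ℝ) • ξ = -ξ - ξ by
        rw [show (-2 : ℝ) = (-1) + (-1) by norm_num, add_smul]
        simp [sub_eq_add_neg]]
      exact hμ
    rcases smul_eq_zero.mp this with h | h
    · norm_num at h
    · simp [Submodule.mem_bot, h]
  have hrange : LinearMap.range (A ∘ₗ K.subtype) = Submodule.map A K := by
    rw [LinearMap.range_comp, Submodule.range_subtype]
  rw [heq, ← hrange]
  exact LinearMap.finrank_range_of_inj hinj
end
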